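/- arXiv:2402.00206 — 5 statements merged into one kernel-verified Lean document; each statement's English description precedes it below -/
import Mathlib

section
/- Let T be the poset of closed intervals of ℕ ordered by inclusion, viewed as a category. If D is a category with pullbacks and F : Tᵒᵖ → D is a presheaf satisfying the sheaf condition on Johnstone covers (for any interval [a,b] and any a ≤ p ≤ b, F([a,b]) is the pullback of F([a,p]) → F([p,p]) ← F([p,b])), then F is determined up to natural isomorphism by its values on intervals of length zero and one together with the restriction spans F([t,t]) ← F([t,t+1]) → F([t+1,t+1]). -/
open CategoryTheory CategoryTheory.Limits

/-- Closed intervals `[a,b] ⊆ ℕ` (with `a ≤ b`), ordered by inclusion. -/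
def NatInt : Type := {p : ℕ × ℕ // p.1 ≤ p.2}

instance : PartialOrder NatInt where
  le I J := J.val.1 ≤ I.val.1 ∧ I.val.2 ≤ J.val.2
  le_refl _ := ⟨le_rfl, le_rfl⟩
  le_trans _ _ _ h h' := ⟨le_trans h'.1 h.1, le_trans h.2 h'.2⟩
  le_antisymm I J h h' := Subtype.ext (Prod.ext (le_antisymm h'.1 h.1) (le_antisymm h.2 h'.2))

/-- The closed interval `[a,b]`. -/
def NatInt.mk (a b : ℕ) (h : a ≤ b) : NatInt := ⟨(a, b), h⟩

lemma NatInt.mk_le_mk {a b c d : ℕ} {h : a ≤ b} {h' : c ≤ d}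
    (h1 : c ≤ a) (h2 : b ≤ d) : NatInt.mk a b h ≤ NatInt.mk c d h' := ⟨h1, h2⟩

variable {D : Type*} [Category D]

/-- The sheaf condition (persistent narrative) for a presheaf on the poset of
closed intervals of `ℕ`, w.r.t. the Johnstone coverage. -/
def IsPersistentNarr (F : NatIntᵒᵖ ⥤ D) : Prop :=
  ∀ (a p b : ℕ) (hap : a ≤ p) (hpb : p ≤ b),
    IsPullback
      (F.map (homOfLE (NatInt.mk_le_mk (h := hap) (h' := hap.trans hpb) le_rfl hpb)).op)
      (F.map (homOfLE (NatInt.mk_le_mk (h := hpb) (h' := hap.trans hpb) hap le_rfl)).op)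
      (F.map (homOfLE (NatInt.mk_le_mk (h := le_rfl) (h' := hap) hap le_rfl)).op)
      (F.map (homOfLE (NatInt.mk_le_mk (h := le_rfl) (h' := hpb) le_rfl hpb)).op)

/-- The cosheaf condition (cumulative narrative). -/
def IsCumulativeNarr (G : NatInt ⥤ D) : Prop :=
  ∀ (a p b : ℕ) (hap : a ≤ p) (hpb : p ≤ b),
    IsPushout
      (G.map (homOfLE (NatInt.mk_le_mk (h := le_rfl) (h' := hap) hap le_rfl)))
      (G.map (homOfLE (NatInt.mk_le_mk (h := le_rfl) (h' := hpb) le_rfl hpb)))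
      (G.map (homOfLE (NatInt.mk_le_mk (h := hap) (h' := hap.trans hpb) le_rfl hpb)))
      (G.map (homOfLE (NatInt.mk_le_mk (h := hpb) (h' := hap.trans hpb) hap le_rfl)))

namespace NarrAux

instance (X Y : NatIntᵒᵖ) : Subsingleton (X ⟶ Y) :=
  ⟨fun f g => Quiver.Hom.unop_inj (Subsingleton.elim _ _)⟩

/-- The interval `[a,b]` as an object of `NatIntᵒᵖ`. -/
abbrev NI (a b : ℕ) (h : a ≤ b) : NatIntᵒᵖ := Opposite.op (NatInt.mk a b h)

/-- The restriction morphism (in the opposite category) from `[a,b]` to `[c,d] ⊆ [a,b]`. -/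
abbrev res {a b c d : ℕ} (hab : a ≤ b) (hcd : c ≤ d) (h1 : a ≤ c) (h2 : d ≤ b) :
    NI a b hab ⟶ NI c d hcd := (homOfLE (NatInt.mk_le_mk h1 h2)).op

variable {D : Type*} [Category D]

lemma map_res_comp (F : NatIntᵒᵖ ⥤ D) {X Y Z : NatIntᵒᵖ} (f : X ⟶ Y) (g : Y ⟶ Z)
    (h : X ⟶ Z) : F.map f ≫ F.map g = F.map h := by
  rw [← F.map_comp]; congr 1

/-- All the data/hypotheses of the theorem, bundled. -/
structure Setup (F G : NatIntᵒᵖ ⥤ D) : Prop where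
  hF : IsPersistentNarr F
  hG : IsPersistentNarr G
  hobj0 : ∀ t : ℕ, F.obj (NI t t le_rfl) = G.obj (NI t t le_rfl)
  hobj1 : ∀ t : ℕ, F.obj (NI t (t+1) (Nat.le_succ t)) = G.obj (NI t (t+1) (Nat.le_succ t))
  hmapl : ∀ t : ℕ,
    F.map (res (Nat.le_succ t) le_rfl le_rfl (Nat.le_succ t)) ≫ eqToHom (hobj0 t) =
    eqToHom (hobj1 t) ≫ G.map (res (Nat.le_succ t) le_rfl le_rfl (Nat.le_succ t))
  hmapr : ∀ t : ℕ,
    F.map (res (Nat.le_succ t) le_rfl (Nat.le_succ t) le_rfl) ≫ eqToHom (hobj0 (t+1)) =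
    eqToHom (hobj1 t) ≫ G.map (res (Nat.le_succ t) le_rfl (Nat.le_succ t) le_rfl)

variable {F G : NatIntᵒᵖ ⥤ D}

/-- An isomorphism `F [a,b] ≅ G [a,b]` compatible with restriction to `[a,a]`. -/
def Sub (S : Setup F G) (a b : ℕ) (h : a ≤ b) :=
  {e : F.obj (NI a b h) ≅ G.obj (NI a b h) //
    F.map (res h le_rfl le_rfl h) ≫ eqToHom (S.hobj0 a) =
      e.hom ≫ G.map (res h le_rfl le_rfl h)}

/-- The inductive step: the iso on `[a,b]` built from the one on `[a+1,b]`. -/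
noncomputable def stepIso (S : Setup F G) (a b : ℕ) (h : a ≤ b) (hb : a + 2 ≤ b)
    (prev : Sub S (a+1) b (by omega)) : F.obj (NI a b h) ≅ G.obj (NI a b h) :=
  ((S.hF a (a+1) b (Nat.le_succ a) (by omega)).of_iso
      (Iso.refl _) (eqToIso (S.hobj1 a)) prev.1 (eqToIso (S.hobj0 (a+1)))
      (fst' := F.map (res h (Nat.le_succ a) le_rfl (by omega)) ≫ eqToHom (S.hobj1 a))
      (snd' := F.map (res h (by omega) (Nat.le_succ a) le_rfl) ≫ prev.1.hom)
      (f' := G.map (res (Nat.le_succ a) le_rfl (Nat.le_succ a) le_rfl))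
      (g' := G.map (res (by omega) le_rfl le_rfl (by omega)))
      (by simp) (by simp)
      (by simpa using S.hmapr a)
      (by simpa using prev.2)).isoIsPullback _ _
    (S.hG a (a+1) b (Nat.le_succ a) (by omega))

lemma stepIso_fst (S : Setup F G) (a b : ℕ) (h : a ≤ b) (hb : a + 2 ≤ b)
    (prev : Sub S (a+1) b (by omega)) :
    (stepIso S a b h hb prev).hom ≫ G.map (res h (Nat.le_succ a) le_rfl (by omega)) =
      F.map (res h (Nat.le_succ a) le_rfl (by omega)) ≫ eqToHom (S.hobj1 a) := by
  unfold stepIso; apply IsPullback.isoIsPullback_hom_fst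

lemma stepIso_snd (S : Setup F G) (a b : ℕ) (h : a ≤ b) (hb : a + 2 ≤ b)
    (prev : Sub S (a+1) b (by omega)) :
    (stepIso S a b h hb prev).hom ≫ G.map (res h (by omega) (Nat.le_succ a) le_rfl) =
      F.map (res h (by omega) (Nat.le_succ a) le_rfl) ≫ prev.1.hom := by
  unfold stepIso; apply IsPullback.isoIsPullback_hom_snd

lemma stepProp (S : Setup F G) (a b : ℕ) (h : a ≤ b) (hb : a + 2 ≤ b)
    (prev : Sub S (a+1) b (by omega)) :
    F.map (res h le_rfl le_rfl h) ≫ eqToHom (S.hobj0 a) =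
      (stepIso S a b h hb prev).hom ≫ G.map (res h le_rfl le_rfl h) := by
  have e1 : G.map (res h le_rfl le_rfl h) =
      G.map (res h (Nat.le_succ a) le_rfl (by omega)) ≫
        G.map (res (Nat.le_succ a) le_rfl le_rfl (Nat.le_succ a)) :=
    (map_res_comp G _ _ _).symm
  have e2 : F.map (res h le_rfl le_rfl h) =
      F.map (res h (Nat.le_succ a) le_rfl (by omega)) ≫
        F.map (res (Nat.le_succ a) le_rfl le_rfl (Nat.le_succ a)) :=
    (map_res_comp F _ _ _).symm
  rw [e1, e2, ← Category.assoc, stepIso_fst S a b h hb prev, Category.assoc,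
    Category.assoc, ← S.hmapl a]

lemma base0 (S : Setup F G) (a : ℕ) (h : a ≤ a) :
    F.map (res h le_rfl le_rfl h) ≫ eqToHom (S.hobj0 a) =
      (eqToIso (S.hobj0 a)).hom ≫ G.map (res h le_rfl le_rfl h) := by
  rw [show (res h le_rfl le_rfl h) = 𝟙 (NI a a le_rfl) from Subsingleton.elim _ _]
  simp

lemma base1 (S : Setup F G) (a : ℕ) (h : a ≤ a + 1) :
    F.map (res h le_rfl le_rfl h) ≫ eqToHom (S.hobj0 a) =
      (eqToIso (S.hobj1 a)).hom ≫ G.map (res h le_rfl le_rfl h) := by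
  simpa using S.hmapl a

def NPhi0 (S : Setup F G) (a b : ℕ) (h : a ≤ b) (e : b = a + 0) : Sub S a b h := by
  have e' : a = b := by omega
  cases e'
  exact ⟨eqToIso (S.hobj0 a), base0 S a h⟩

def NPhi1 (S : Setup F G) (a b : ℕ) (h : a ≤ b) (e : b = a + 1) : Sub S a b h := by
  have e' : a + 1 = b := by omega
  cases e'
  exact ⟨eqToIso (S.hobj1 a), base1 S a h⟩

/-- The iso family, by recursion on the length of the interval. -/
noncomputable def NPhi (S : Setup F G) :
    (n a b : ℕ) → (h : a ≤ b) → (e : b = a + n) → Sub S a b h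
  | 0, a, b, h, e => NPhi0 S a b h e
  | 1, a, b, h, e => NPhi1 S a b h e
  | (n+2), a, b, h, e =>
      ⟨stepIso S a b h (by omega) (NPhi S (n+1) (a+1) b (by omega) (by omega)),
       stepProp S a b h (by omega) _⟩

lemma NPhi_irrel (S : Setup F G) (n n' a b : ℕ) (h h' : a ≤ b) (e : b = a + n)
    (e' : b = a + n') : NPhi S n a b h e = NPhi S n' a b h' e' := by
  have : n = n' := by omega
  subst this
  rfl

/-- The canonical component iso. -/
noncomputable def phi (S : Setup F G) (a b : ℕ) (h : a ≤ b) : Sub S a b h :=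
  NPhi S (b - a) a b h (by omega)

lemma NPhi_eq_phi (S : Setup F G) (n a b : ℕ) (h : a ≤ b) (e : b = a + n) :
    NPhi S n a b h e = phi S a b h :=
  NPhi_irrel S n (b - a) a b h h e (by omega)

lemma phi_zero (S : Setup F G) (a : ℕ) (h : a ≤ a) :
    (phi S a a h).1 = eqToIso (S.hobj0 a) := by
  rw [← NPhi_eq_phi S 0 a a h rfl]; rfl

lemma phi_one (S : Setup F G) (a : ℕ) (h : a ≤ a + 1) :
    (phi S a (a+1) h).1 = eqToIso (S.hobj1 a) := by
  rw [← NPhi_eq_phi S 1 a (a+1) h rfl]; rfl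

lemma phi_sing (S : Setup F G) (a b : ℕ) (h : a ≤ b) :
    F.map (res h le_rfl le_rfl h) ≫ eqToHom (S.hobj0 a) =
      (phi S a b h).1.hom ≫ G.map (res h le_rfl le_rfl h) :=
  (phi S a b h).2

lemma phi_fst (S : Setup F G) (a b : ℕ) (h : a ≤ b) (hb : a + 2 ≤ b) :
    (phi S a b h).1.hom ≫ G.map (res h (Nat.le_succ a) le_rfl (by omega)) =
      F.map (res h (Nat.le_succ a) le_rfl (by omega)) ≫ eqToHom (S.hobj1 a) := by
  obtain ⟨n, rfl⟩ : ∃ n, b = a + (n + 2) := ⟨b - a - 2, by omega⟩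
  rw [← NPhi_eq_phi S (n+2) a (a + (n+2)) h rfl]
  exact stepIso_fst S a _ h (by omega) _

lemma phi_snd (S : Setup F G) (a b : ℕ) (h : a ≤ b) (hb : a + 2 ≤ b) :
    (phi S a b h).1.hom ≫ G.map (res h (by omega) (Nat.le_succ a) le_rfl) =
      F.map (res h (by omega) (Nat.le_succ a) le_rfl) ≫
        (phi S (a+1) b (by omega)).1.hom := by
  obtain ⟨n, rfl⟩ : ∃ n, b = a + (n + 2) := ⟨b - a - 2, by omega⟩
  rw [← NPhi_eq_phi S (n+2) a (a + (n+2)) h rfl,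
      ← NPhi_eq_phi S (n+1) (a+1) (a + (n+2)) (by omega) (by omega)]
  exact stepIso_snd S a _ h (by omega) _

lemma dropLeft (S : Setup F G) (a b : ℕ) (h : a ≤ b) (hlt : a < b) :
    (phi S a b h).1.hom ≫ G.map (res h hlt (Nat.le_succ a) le_rfl) =
      F.map (res h hlt (Nat.le_succ a) le_rfl) ≫ (phi S (a+1) b hlt).1.hom := by
  rcases Nat.lt_or_ge b (a+2) with hb | hb
  · obtain rfl : b = a + 1 := by omega
    rw [phi_one, phi_zero]
    simpa using (S.hmapr a).symm
  · exact phi_snd S a b h hb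

lemma dropRight (S : Setup F G) : ∀ (n a b : ℕ) (h : a ≤ b), b = a + n →
    (phi S a (b+1) (by omega)).1.hom ≫ G.map (res (by omega) h le_rfl (Nat.le_succ b)) =
      F.map (res (by omega) h le_rfl (Nat.le_succ b)) ≫ (phi S a b h).1.hom := by
  intro n
  induction n with
  | zero =>
    intro a b h e
    obtain rfl : a = b := by omega
    rw [phi_one, phi_zero]
    simpa using (S.hmapl a).symm
  | succ n IH =>
    intro a b h e
    rcases Nat.lt_or_ge b (a+2) with hb2 | hb2
    · obtain rfl : b = a + 1 := by omega
      rw [phi_one]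
      simpa using phi_fst S a (a+1+1) (by omega) (by omega)
    · apply (S.hG a (a+1) b (Nat.le_succ a) (by omega)).hom_ext
      · rw [Category.assoc, Category.assoc,
          map_res_comp G _ _ (res (show a ≤ b+1 by omega) (Nat.le_succ a) le_rfl (by omega)),
          phi_fst S a (b+1) (by omega) (by omega),
          phi_fst S a b (by omega) hb2,
          ← Category.assoc,
          map_res_comp F _ _ (res (show a ≤ b+1 by omega) (Nat.le_succ a) le_rfl (by omega))]
      · rw [Category.assoc, Category.assoc,
          map_res_comp G _ _ (res (show a ≤ b+1 by omega) (show a+1 ≤ b by omega)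
            (Nat.le_succ a) (Nat.le_succ b)),
          ← map_res_comp G (res (show a ≤ b+1 by omega) (show a+1 ≤ b+1 by omega)
            (Nat.le_succ a) le_rfl)
            (res (show a+1 ≤ b+1 by omega) (show a+1 ≤ b by omega) le_rfl (Nat.le_succ b)),
          ← Category.assoc,
          phi_snd S a (b+1) (by omega) (by omega),
          Category.assoc,
          IH (a+1) b (by omega) (by omega),
          ← Category.assoc,
          map_res_comp F _ _ (res (show a ≤ b+1 by omega) (show a+1 ≤ b by omega)
            (Nat.le_succ a) (Nat.le_succ b)),
          phi_snd S a b (by omega) hb2,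
          ← Category.assoc,
          map_res_comp F _ _ (res (show a ≤ b+1 by omega) (show a+1 ≤ b by omega)
            (Nat.le_succ a) (Nat.le_succ b))]

lemma natur (S : Setup F G) : ∀ (k a b c d : ℕ) (hab : a ≤ b) (hcd : c ≤ d)
    (h1 : a ≤ c) (h2 : d ≤ b), c - a + (b - d) = k →
    (phi S a b hab).1.hom ≫ G.map (res hab hcd h1 h2) =
      F.map (res hab hcd h1 h2) ≫ (phi S c d hcd).1.hom := by
  intro k
  induction k with
  | zero =>
    intro a b c d hab hcd h1 h2 e
    obtain rfl : a = c := by omega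
    obtain rfl : b = d := by omega
    rw [show res hab hcd h1 h2 = 𝟙 (NI a b hab) from Subsingleton.elim _ _]
    simp
  | succ k IH =>
    intro a b c d hab hcd h1 h2 e
    by_cases hac : a < c
    · rw [← map_res_comp G (res hab (show a+1 ≤ b by omega) (Nat.le_succ a) le_rfl)
            (res (show a+1 ≤ b by omega) hcd (by omega) h2) (res hab hcd h1 h2),
          ← Category.assoc, dropLeft S a b hab (by omega), Category.assoc,
          IH (a+1) b c d (by omega) hcd (by omega) h2 (by omega),
          ← Category.assoc, map_res_comp F _ _ (res hab hcd h1 h2)]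
    · obtain ⟨b', rfl⟩ : ∃ b', b = b' + 1 := ⟨b - 1, by omega⟩
      rw [← map_res_comp G (res hab (show a ≤ b' by omega) le_rfl (Nat.le_succ b'))
            (res (show a ≤ b' by omega) hcd h1 (by omega)) (res hab hcd h1 h2),
          ← Category.assoc, dropRight S (b' - a) a b' (by omega) (by omega),
          Category.assoc,
          IH a b' c d (by omega) hcd h1 (by omega) (by omega),
          ← Category.assoc, map_res_comp F _ _ (res hab hcd h1 h2)]

end NarrAux

/-- A persistent narrative on the poset of closed intervals of ℕ (a sheaf for
the Johnstone coverage, valued in a category with pullbacks) is determined up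
to natural isomorphism by its values on intervals of length zero and one
together with the restriction spans
`F([t,t]) ← F([t,t+1]) → F([t+1,t+1])`. -/
theorem narrative_determined_by_short_intervals
    {D : Type*} [Category D] [HasPullbacks D]
    (F G : NatIntᵒᵖ ⥤ D)
    (hF : IsPersistentNarr F) (hG : IsPersistentNarr G)
    (hobj0 : ∀ t : ℕ, F.obj (Opposite.op (NatInt.mk t t le_rfl)) =
      G.obj (Opposite.op (NatInt.mk t t le_rfl)))
    (hobj1 : ∀ t : ℕ, F.obj (Opposite.op (NatInt.mk t (t+1) (Nat.le_succ t))) =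
      G.obj (Opposite.op (NatInt.mk t (t+1) (Nat.le_succ t))))
    (hmapl : ∀ t : ℕ,
      F.map (homOfLE (NatInt.mk_le_mk (h := le_rfl) (h' := Nat.le_succ t)
        le_rfl (Nat.le_succ t))).op ≫ eqToHom (hobj0 t) =
      eqToHom (hobj1 t) ≫ G.map (homOfLE (NatInt.mk_le_mk (h := le_rfl)
        (h' := Nat.le_succ t) le_rfl (Nat.le_succ t))).op)
    (hmapr : ∀ t : ℕ,
      F.map (homOfLE (NatInt.mk_le_mk (h := le_rfl) (h' := Nat.le_succ t)
        (Nat.le_succ t) le_rfl)).op ≫ eqToHom (hobj0 (t+1)) =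
      eqToHom (hobj1 t) ≫ G.map (homOfLE (NatInt.mk_le_mk (h := le_rfl)
        (h' := Nat.le_succ t) (Nat.le_succ t) le_rfl)).op) :
    Nonempty (F ≅ G) := by
  have S : NarrAux.Setup F G := ⟨hF, hG, hobj0, hobj1, hmapl, hmapr⟩
  refine ⟨NatIso.ofComponents
    (fun X => (NarrAux.phi S X.unop.val.1 X.unop.val.2 X.unop.2).1) ?_⟩
  intro X Y f
  exact (NarrAux.natur S _ X.unop.val.1 X.unop.val.2 Y.unop.val.1 Y.unop.val.2
    X.unop.2 Y.unop.2 (leOfHom f.unop).1 (leOfHom f.unop).2 rfl).symm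
end

section
/- If the pushout L +_M R of a span of graph homomorphisms L ← M → R (in the category of directed multigraphs) is a complete graph (every pair of distinct vertices is joined by at least one edge), then at least one of the two homomorphisms M → L, M → R is surjective on vertices. -/
open CategoryTheory CategoryTheory.Limits

universe u

/-- The category of directed multigraphs: `Set`-valued functors on the
two-object schema `{E ⇉ V}` (realized as the walking parallel pair). -/
abbrev Gr : Type (u + 1) := WalkingParallelPair ⥤ Type u

/-- The edges of a directed multigraph. -/
abbrev Gr.Edges (G : Gr.{u}) : Type u := G.obj WalkingParallelPair.zero

/-- The vertices of a directed multigraph. -/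
abbrev Gr.Verts (G : Gr.{u}) : Type u := G.obj WalkingParallelPair.one

/-- The source of an edge. -/
def Gr.src (G : Gr.{u}) (e : G.Edges) : G.Verts := G.map WalkingParallelPairHom.left e

/-- The target of an edge. -/
def Gr.tgt (G : Gr.{u}) (e : G.Edges) : G.Verts := G.map WalkingParallelPairHom.right e

/-- A multigraph is complete if every pair of distinct vertices is joined by
at least one edge. -/
def Gr.IsComplete (G : Gr.{u}) : Prop :=
  ∀ u v : G.Verts, u ≠ v →
    ∃ e : G.Edges, (G.src e = u ∧ G.tgt e = v) ∨ (G.src e = v ∧ G.tgt e = u)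

/-
Suppose `a ∈ L` and `b ∈ R` are missed by `f` and `g`. Colour `a` left, `b` right and every other
vertex of `L` and `R` neutral; this respects edges of the graph whose edges join any two colours
except left and right, and the two colourings agree on `M`. By the universal property the pushout
maps to that graph, so no edge of the pushout joins the images of `a` and `b`, although they are
distinct vertices.
-/

open WalkingParallelPair

namespace Gr

variable {G H : Gr.{u}}

@[simp]
lemma src_map (α : G ⟶ H) (e : G.Edges) : H.src (α.app zero e) = α.app one (G.src e) :=
  (NatTrans.naturality_apply α WalkingParallelPairHom.left e).symm

@[simp]
lemma tgt_map (α : G ⟶ H) (e : G.Edges) : H.tgt (α.app zero e) = α.app one (G.tgt e) :=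
  (NatTrans.naturality_apply α WalkingParallelPairHom.right e).symm

variable {V : Type u} (r : V → V → Prop)

def ofRel : Gr.{u} :=
  parallelPair (TypeCat.ofHom fun e : {p : V × V // r p.1 p.2} => e.1.1)
    (TypeCat.ofHom fun e : {p : V × V // r p.1 p.2} => e.1.2)

variable {r}

@[simp]
lemma ofRel_src (e : (ofRel r).Edges) : (ofRel r).src e = e.1.1 :=
  rfl

@[simp]
lemma ofRel_tgt (e : (ofRel r).Edges) : (ofRel r).tgt e = e.1.2 :=
  rfl

def toOfRel (φ : G.Verts → V) (hφ : ∀ e, r (φ (G.src e)) (φ (G.tgt e))) : G ⟶ ofRel r :=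
  parallelPairHomMk (TypeCat.ofHom fun e => ⟨(φ (G.src e), φ (G.tgt e)), hφ e⟩) (TypeCat.ofHom φ)
    rfl rfl

@[simp]
lemma toOfRel_app_one (φ : G.Verts → V) (hφ : ∀ e, r (φ (G.src e)) (φ (G.tgt e))) (v : G.Verts) :
    (toOfRel φ hφ).app one v = φ v :=
  rfl

lemma rel_app_src_tgt (α : G ⟶ ofRel r) (e : G.Edges) :
    r (α.app one (G.src e)) (α.app one (G.tgt e)) := by
  rw [← src_map, ← tgt_map]
  exact (α.app zero e).2

lemma ofRel_hom_ext {α β : G ⟶ ofRel r} (h : ∀ v, α.app one v = β.app one v) : α = β := by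
  ext x e
  cases x with
  | zero =>
    have hsrc : (ofRel r).src (α.app zero e) = (ofRel r).src (β.app zero e) := by
      rw [src_map, src_map, h]
    have htgt : (ofRel r).tgt (α.app zero e) = (ofRel r).tgt (β.app zero e) := by
      rw [tgt_map, tgt_map, h]
    exact Subtype.ext (Prod.ext hsrc htgt)
  | one => exact h e

lemma IsComplete.rel_of_ne (hG : G.IsComplete) (α : G ⟶ ofRel r) {u v : G.Verts} (huv : u ≠ v) :
    r (α.app one u) (α.app one v) ∨ r (α.app one v) (α.app one u) := by
  obtain ⟨e, ⟨rfl, rfl⟩ | ⟨rfl, rfl⟩⟩ := hG u v huv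
  · exact Or.inl (rel_app_src_tgt α e)
  · exact Or.inr (rel_app_src_tgt α e)

lemma IsComplete.rel_of_pushout {M L R : Gr.{u}} {f : M ⟶ L} {g : M ⟶ R}
    (hP : (pushout f g).IsComplete) {φL : L.Verts → V} {φR : R.Verts → V}
    (hL : ∀ e, r (φL (L.src e)) (φL (L.tgt e))) (hR : ∀ e, r (φR (R.src e)) (φR (R.tgt e)))
    (hM : ∀ m, φL (f.app one m) = φR (g.app one m)) {a : L.Verts} {b : R.Verts}
    (hab : φL a ≠ φR b) : r (φL a) (φR b) ∨ r (φR b) (φL a) := by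
  let α : pushout f g ⟶ ofRel r :=
    pushout.desc (toOfRel φL hL) (toOfRel φR hR) <| ofRel_hom_ext fun m => by
      simp only [NatTrans.comp_app_apply, toOfRel_app_one]
      exact hM m
  have hα_inl : α.app one ((pushout.inl f g).app one a) = φL a := by
    rw [← NatTrans.comp_app_apply, pushout.inl_desc, toOfRel_app_one]
  have hα_inr : α.app one ((pushout.inr f g).app one b) = φR b := by
    rw [← NatTrans.comp_app_apply, pushout.inr_desc, toOfRel_app_one]
  rw [← hα_inl, ← hα_inr] at hab ⊢
  exact hP.rel_of_ne α fun h => hab (congrArg _ h)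

end Gr

/-- If the pushout `L +_M R` of a span of multigraph homomorphisms
`L ← M → R` is a complete graph, then at least one of the two legs is
surjective on vertices. -/
theorem pushout_complete_implies_leg_vertex_surjective
    (M L R : Gr.{u}) (f : M ⟶ L) (g : M ⟶ R)
    (hcomp : (pushout f g).IsComplete) :
    Function.Surjective (f.app WalkingParallelPair.one) ∨
    Function.Surjective (g.app WalkingParallelPair.one) := by
  by_contra! hnot
  simp only [Function.Surjective, not_forall, not_exists] at hnot
  obtain ⟨⟨a, ha⟩, ⟨b, hb⟩⟩ := hnot
  classical
  let r : Option (ULift.{u} Bool) → Option (ULift.{u} Bool) → Prop :=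
    fun x y => x = y ∨ x = none ∨ y = none
  let mark {G : Gr.{u}} (v₀ : G.Verts) (c : Bool) : G.Verts → Option (ULift.{u} Bool) :=
    fun v => if v = v₀ then some ⟨c⟩ else none
  have hmark : ∀ {G : Gr.{u}} (v₀ : G.Verts) (c : Bool) (v w : G.Verts),
      r (mark v₀ c v) (mark v₀ c w) := by
    intro G v₀ c v w
    simp only [r, mark]
    split_ifs <;> simp
  have hM : ∀ m, mark a true (f.app one m) = mark b false (g.app one m) := fun m => by
    simp [mark, ha m, hb m]
  simpa [r, mark] using hcomp.rel_of_pushout (fun e => hmark a true _ _)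
    (fun e => hmark b false _ _) hM (a := a) (b := b) (by simp [mark])
end

section
/- Let D be a category with limits and colimits and T a finite time category. The functor K : Pe(T,D) → Cu(T,D) (colimit over subintervals) is left adjoint to the functor P : Cu(T,D) → Pe(T,D) (limit over subintervals). -/
open CategoryTheory CategoryTheory.Limits

variable {D : Type*} [Category D]

/-- The join (smallest closed interval containing both). -/
def NatInt.sup (I J : NatInt) : NatInt :=
  ⟨(min I.val.1 J.val.1, max I.val.2 J.val.2),
    le_trans (min_le_left _ _) (le_trans I.2 (le_max_left _ _))⟩

/-- A set of intervals is a sub-join-semilattice if it is closed under joins. -/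
def SupClosed' (S : Set NatInt) : Prop :=
  ∀ I ∈ S, ∀ J ∈ S, NatInt.sup I J ∈ S

/-- The sheaf condition for a presheaf on a sub-join-semilattice `S` of the
interval poset, for all Johnstone covers lying in `S`. -/
def IsPersistentOn (S : Set NatInt) {D : Type*} [Category D]
    (F : (↥S)ᵒᵖ ⥤ D) : Prop :=
  ∀ (a p b : ℕ) (hap : a ≤ p) (hpb : p ≤ b)
    (hab : NatInt.mk a b (hap.trans hpb) ∈ S) (hl : NatInt.mk a p hap ∈ S)
    (hm : NatInt.mk p p le_rfl ∈ S) (hr : NatInt.mk p b hpb ∈ S),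
    IsPullback
      (F.map (homOfLE (Subtype.mk_le_mk.mpr
        (NatInt.mk_le_mk (h := hap) (h' := hap.trans hpb) le_rfl hpb) :
        (⟨_, hl⟩ : ↥S) ≤ ⟨_, hab⟩)).op)
      (F.map (homOfLE (Subtype.mk_le_mk.mpr
        (NatInt.mk_le_mk (h := hpb) (h' := hap.trans hpb) hap le_rfl) :
        (⟨_, hr⟩ : ↥S) ≤ ⟨_, hab⟩)).op)
      (F.map (homOfLE (Subtype.mk_le_mk.mpr
        (NatInt.mk_le_mk (h := le_rfl) (h' := hap) hap le_rfl) :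
        (⟨_, hm⟩ : ↥S) ≤ ⟨_, hl⟩)).op)
      (F.map (homOfLE (Subtype.mk_le_mk.mpr
        (NatInt.mk_le_mk (h := le_rfl) (h' := hpb) le_rfl hpb) :
        (⟨_, hm⟩ : ↥S) ≤ ⟨_, hr⟩)).op)

/-- The cosheaf condition on a sub-join-semilattice `S`. -/
def IsCumulativeOn (S : Set NatInt) {D : Type*} [Category D]
    (G : ↥S ⥤ D) : Prop :=
  ∀ (a p b : ℕ) (hap : a ≤ p) (hpb : p ≤ b)
    (hab : NatInt.mk a b (hap.trans hpb) ∈ S) (hl : NatInt.mk a p hap ∈ S)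
    (hm : NatInt.mk p p le_rfl ∈ S) (hr : NatInt.mk p b hpb ∈ S),
    IsPushout
      (G.map (homOfLE (Subtype.mk_le_mk.mpr
        (NatInt.mk_le_mk (h := le_rfl) (h' := hap) hap le_rfl) :
        (⟨_, hm⟩ : ↥S) ≤ ⟨_, hl⟩)))
      (G.map (homOfLE (Subtype.mk_le_mk.mpr
        (NatInt.mk_le_mk (h := le_rfl) (h' := hpb) le_rfl hpb) :
        (⟨_, hm⟩ : ↥S) ≤ ⟨_, hr⟩)))
      (G.map (homOfLE (Subtype.mk_le_mk.mpr
        (NatInt.mk_le_mk (h := hap) (h' := hap.trans hpb) le_rfl hpb) :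
        (⟨_, hl⟩ : ↥S) ≤ ⟨_, hab⟩)))
      (G.map (homOfLE (Subtype.mk_le_mk.mpr
        (NatInt.mk_le_mk (h := hpb) (h' := hap.trans hpb) hap le_rfl) :
        (⟨_, hr⟩ : ↥S) ≤ ⟨_, hab⟩)))

/-- The category of persistent `D`-narratives with time `S`. -/
def Pe (S : Set NatInt) (D : Type*) [Category D] : Type _ :=
  ObjectProperty.FullSubcategory (fun F : (↥S)ᵒᵖ ⥤ D => IsPersistentOn S F)

instance (S : Set NatInt) (D : Type*) [Category D] : Category (Pe S D) :=
  ObjectProperty.FullSubcategory.category _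

/-- The category of cumulative `D`-narratives with time `S`. -/
def Cu (S : Set NatInt) (D : Type*) [Category D] : Type _ :=
  ObjectProperty.FullSubcategory (fun G : ↥S ⥤ D => IsCumulativeOn S G)

instance (S : Set NatInt) (D : Type*) [Category D] : Category (Cu S D) :=
  ObjectProperty.FullSubcategory.category _

/-- Inclusion of time categories. -/
def inclTime {S T : Set NatInt} (hST : S ⊆ T) : ↥S ⥤ ↥T :=
  Monotone.functor (f := fun I => (⟨I.1, hST I.2⟩ : ↥T)) (fun _ _ h => h)

/-- The subposet of intervals of `S` contained in `I`. -/
def below (S : Set NatInt) (I : ↥S) : Type := {J : ↥S // J ≤ I}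

instance (S : Set NatInt) (I : ↥S) : PartialOrder (below S I) :=
  Subtype.partialOrder _

/-- Inclusion of the subposet `T/[a,b]` into the time category. -/
def belowIncl (S : Set NatInt) (I : ↥S) : below S I ⥤ ↥S :=
  Monotone.functor (f := fun J => J.1) (fun _ _ h => h)

/-!
`K ⊣ P` already holds between all presheaves and all copresheaves on `S`: the unit
`F(I) → lim_{J ⊆ I} colim_{K ⊆ J} F(K)` and the counit `colim_{J ⊆ I} lim_{K ⊆ J} G(K) → G(I)`
are the evident (co)limit maps. It remains to see that `K F` is a cosheaf (and dually, applying
this to `G.op` in `Dᵒᵖ`, that `P G` is a sheaf). A subinterval `J ⊆ [a,b]` lies in `[a,p]`, in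
`[p,b]`, or contains `[p,p]`; and two subintervals of `J` lying in `[a,p]` are both contained in
their join, which is again in `S`, inside `J` and inside `[a,p]`. Hence a pushout cocone on
`K F [a,p] ← K F [p,p] → K F [p,b]` glues to a unique cocone on the subintervals of `[a,b]`.
-/

open Opposite

namespace NatInt

lemma le_sup_left (I J : NatInt) : I ≤ I.sup J :=
  ⟨min_le_left _ _, le_max_left _ _⟩

lemma le_sup_right (I J : NatInt) : J ≤ I.sup J :=
  ⟨min_le_right _ _, le_max_right _ _⟩

lemma sup_le {I J K : NatInt} (hI : I ≤ K) (hJ : J ≤ K) : I.sup J ≤ K :=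
  ⟨le_min hI.1 hJ.1, max_le hI.2 hJ.2⟩

variable {a p b : ℕ} (hap : a ≤ p) (hpb : p ≤ b)

lemma le_left_or_le_right_or_point_le {J : NatInt} (hJ : J ≤ mk a b (hap.trans hpb)) :
    J ≤ mk a p hap ∨ J ≤ mk p b hpb ∨ mk p p le_rfl ≤ J := by
  obtain ⟨hac, hdb⟩ := hJ
  rcases le_total J.val.2 p with hdp | hpd
  · exact .inl ⟨hac, hdp⟩
  rcases le_total p J.val.1 with hpc | hcp
  · exact .inr (.inl ⟨hpc, hdb⟩)
  · exact .inr (.inr ⟨hcp, hpd⟩)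

end NatInt

-- Makes `J.1 : S` for `J : below S I` well-typed at reducible transparency, as `simp` needs.
attribute [reducible] below

variable {S : Set NatInt}

abbrev belowMap {I I' : S} (h : I ≤ I') : below S I ⥤ below S I' where
  obj J := ⟨J.1, J.2.trans h⟩
  map f := homOfLE (leOfHom f)

abbrev colimDiagram (F : Sᵒᵖ ⥤ D) (I : S) : (below S I)ᵒᵖ ⥤ D where
  obj J := F.obj (op J.unop.1)
  map f := F.map (homOfLE (leOfHom f.unop)).op
  map_id _ := F.map_id _
  map_comp _ _ := F.map_comp _ _

abbrev limDiagram (G : S ⥤ D) (I : S) : below S I ⥤ D where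
  obj J := G.obj J.1
  map f := G.map (homOfLE (leOfHom f))
  map_id _ := G.map_id _
  map_comp _ _ := G.map_comp _ _

section Cumulative

variable [HasColimitsOfSize.{0, 0} D]

lemma map_ι_colimDiagram (F : Sᵒᵖ ⥤ D) {I J K : S} (f : op J ⟶ op K) (hJ : J ≤ I)
    (hK : K ≤ I) :
    F.map f ≫ colimit.ι (colimDiagram F I) (op ⟨K, hK⟩) =
      colimit.ι (colimDiagram F I) (op ⟨J, hJ⟩) :=
  colimit.w (colimDiagram F I)
    (homOfLE (leOfHom f.unop) : (⟨K, hK⟩ : below S I) ⟶ ⟨J, hJ⟩).op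

noncomputable def colimBelowMap (F : Sᵒᵖ ⥤ D) {I I' : S} (h : I ≤ I') :
    colimit (colimDiagram F I) ⟶ colimit (colimDiagram F I') :=
  colimit.pre (colimDiagram F I') (belowMap h).op

@[simp]
lemma ι_colimBelowMap (F : Sᵒᵖ ⥤ D) {I I' : S} (h : I ≤ I') (J : (below S I)ᵒᵖ) :
    colimit.ι (colimDiagram F I) J ≫ colimBelowMap F h =
      colimit.ι (colimDiagram F I') (op ⟨J.unop.1, J.unop.2.trans h⟩) :=
  colimit.ι_pre (colimDiagram F I') (belowMap h).op J

@[simp]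
lemma ι_colimBelowMap_assoc (F : Sᵒᵖ ⥤ D) {I I' : S} (h : I ≤ I') (J : (below S I)ᵒᵖ)
    {W : D} (g : colimit (colimDiagram F I') ⟶ W) :
    colimit.ι (colimDiagram F I) J ≫ colimBelowMap F h ≫ g =
      colimit.ι (colimDiagram F I') (op ⟨J.unop.1, J.unop.2.trans h⟩) ≫ g := by
  rw [← Category.assoc, ι_colimBelowMap]

noncomputable abbrev colimBelow (F : Sᵒᵖ ⥤ D) : S ⥤ D where
  obj I := colimit (colimDiagram F I)
  map f := colimBelowMap F (leOfHom f)
  map_id I := by ext; simp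
  map_comp f g := by ext; simp

noncomputable abbrev colimBelowFunctor : (Sᵒᵖ ⥤ D) ⥤ (S ⥤ D) where
  obj := colimBelow
  map η :=
    { app I := colimMap { app J := η.app (op J.unop.1) }
      naturality _ _ _ := by ext; simp }

end Cumulative

section Persistent

variable [HasLimitsOfSize.{0, 0} D]

lemma π_map_limDiagram (G : S ⥤ D) {I J K : S} (f : K ⟶ J) (hJ : J ≤ I) (hK : K ≤ I) :
    limit.π (limDiagram G I) ⟨K, hK⟩ ≫ G.map f = limit.π (limDiagram G I) ⟨J, hJ⟩ :=
  limit.w (limDiagram G I) (homOfLE (leOfHom f) : (⟨K, hK⟩ : below S I) ⟶ ⟨J, hJ⟩)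

noncomputable def limBelowMap (G : S ⥤ D) {I I' : S} (h : I ≤ I') :
    limit (limDiagram G I') ⟶ limit (limDiagram G I) :=
  limit.pre (limDiagram G I') (belowMap h)

@[simp]
lemma limBelowMap_π (G : S ⥤ D) {I I' : S} (h : I ≤ I') (J : below S I) :
    limBelowMap G h ≫ limit.π (limDiagram G I) J =
      limit.π (limDiagram G I') ⟨J.1, J.2.trans h⟩ :=
  limit.pre_π (limDiagram G I') (belowMap h) J

@[simp]
lemma limBelowMap_π_assoc (G : S ⥤ D) {I I' : S} (h : I ≤ I') (J : below S I)
    {W : D} (g : G.obj J.1 ⟶ W) :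
    limBelowMap G h ≫ limit.π (limDiagram G I) J ≫ g =
      limit.π (limDiagram G I') ⟨J.1, J.2.trans h⟩ ≫ g := by
  rw [← Category.assoc, limBelowMap_π]

noncomputable abbrev limBelow (G : S ⥤ D) : Sᵒᵖ ⥤ D where
  obj I := limit (limDiagram G I.unop)
  map f := limBelowMap G (leOfHom f.unop)
  map_id I := by ext; simp
  map_comp f g := by ext; simp

noncomputable abbrev limBelowFunctor : (S ⥤ D) ⥤ (Sᵒᵖ ⥤ D) where
  obj := limBelow
  map η :=
    { app I := limMap { app J := η.app J.1 }
      naturality _ _ _ := by ext; simp }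

end Persistent

section Adjunction

variable [HasLimitsOfSize.{0, 0} D] [HasColimitsOfSize.{0, 0} D]

@[simps]
noncomputable def colimBelowUnit (F : Sᵒᵖ ⥤ D) : F ⟶ limBelow (colimBelow F) where
  app I := limit.lift _
    { pt := F.obj I
      π :=
        { app J := F.map (homOfLE J.2).op ≫ colimit.ι (colimDiagram F J.1) (op ⟨J.1, le_rfl⟩)
          naturality J J' f := by
            simp only [Functor.const_obj_obj, Functor.const_obj_map, homOfLE_leOfHom,
              Category.id_comp, Category.assoc, ι_colimBelowMap]
            rw [← map_ι_colimDiagram F (homOfLE (leOfHom f)).op le_rfl, ← F.map_comp_assoc]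
            rfl } }
  naturality I I' f := by
    ext
    simp only [Functor.const_obj_obj, homOfLE_leOfHom, Category.assoc, limit.lift_π,
      limBelowMap_π]
    rw [← F.map_comp_assoc]
    rfl

@[simps]
noncomputable def colimBelowCounit (G : S ⥤ D) : colimBelow (limBelow G) ⟶ G where
  app I := colimit.desc _
    { pt := G.obj I
      ι :=
        { app J := limit.π (limDiagram G J.unop.1) ⟨J.unop.1, le_rfl⟩ ≫ G.map (homOfLE J.unop.2)
          naturality J J' f := by
            simp only [Functor.const_obj_obj, homOfLE_leOfHom, limBelowMap_π_assoc,
              Functor.const_obj_map, Category.comp_id]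
            rw [← π_map_limDiagram G (homOfLE (leOfHom f.unop)) le_rfl, Category.assoc,
              ← G.map_comp]
            rfl } }
  naturality I I' f := by
    ext
    simp only [Functor.const_obj_obj, homOfLE_leOfHom, ι_colimBelowMap_assoc, colimit.ι_desc,
      colimit.ι_desc_assoc, Category.assoc]
    rw [← G.map_comp]
    rfl

noncomputable def colimBelowAdjunction : colimBelowFunctor (S := S) (D := D) ⊣ limBelowFunctor :=
  Adjunction.mkOfUnitCounit
    { unit := { app := colimBelowUnit }
      counit := { app := colimBelowCounit } }

end Adjunction

structure IsCoveringSquare (I₀ I₁ I₂ I : S) : Prop where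
  le₀₁ : I₀ ≤ I₁
  le₀₂ : I₀ ≤ I₂
  le₁ : I₁ ≤ I
  le₂ : I₂ ≤ I
  cover : ∀ J ≤ I, J ≤ I₁ ∨ J ≤ I₂ ∨ I₀ ≤ J
  meet : ∀ J, J ≤ I₁ → J ≤ I₂ → J ≤ I₀

section Gluing

variable [HasColimitsOfSize.{0, 0} D] (F : Sᵒᵖ ⥤ D)

lemma map_ι_eq_map_ι (hS : SupClosed' S) {I J K K' : S} (f : op J ⟶ op K) (f' : op J ⟶ op K')
    (hK : K ≤ I) (hK' : K' ≤ I) :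
    F.map f ≫ colimit.ι (colimDiagram F I) (op ⟨K, hK⟩) =
      F.map f' ≫ colimit.ι (colimDiagram F I) (op ⟨K', hK'⟩) := by
  let M : S := ⟨K.1.sup K'.1, hS _ K.2 _ K'.2⟩
  have hMJ : M ≤ J := NatInt.sup_le (leOfHom f.unop) (leOfHom f'.unop)
  have hMI : M ≤ I := NatInt.sup_le hK hK'
  have factor {L : S} (g : op J ⟶ op L) (hLM : L ≤ M) (hL : L ≤ I) :
      F.map g ≫ colimit.ι (colimDiagram F I) (op ⟨L, hL⟩) =
        F.map (homOfLE hMJ).op ≫ colimit.ι (colimDiagram F I) (op ⟨M, hMI⟩) := by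
    rw [← map_ι_colimDiagram F (homOfLE hLM).op hMI hL, ← F.map_comp_assoc]
    rfl
  rw [factor f (NatInt.le_sup_left _ _), factor f' (NatInt.le_sup_right _ _)]

variable {F} {I₀ I₁ I₂ I : S} (sq : IsCoveringSquare I₀ I₁ I₂ I)
  (s : PushoutCocone (colimBelowMap F sq.le₀₁) (colimBelowMap F sq.le₀₂))

lemma ι_inl_eq_ι_inr {K : S} (hK₁ : K ≤ I₁) (hK₂ : K ≤ I₂) :
    colimit.ι (colimDiagram F I₁) (op ⟨K, hK₁⟩) ≫ s.inl =
      colimit.ι (colimDiagram F I₂) (op ⟨K, hK₂⟩) ≫ s.inr := by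
  simpa using colimit.ι (colimDiagram F I₀) (op ⟨K, sq.meet K hK₁ hK₂⟩) ≫= s.condition

open Classical in
noncomputable def gluedLeg (J : (below S I)ᵒᵖ) : F.obj (op J.unop.1) ⟶ s.pt :=
  if h₁ : J.unop.1 ≤ I₁ then colimit.ι (colimDiagram F I₁) (op ⟨J.unop.1, h₁⟩) ≫ s.inl
  else if h₂ : J.unop.1 ≤ I₂ then colimit.ι (colimDiagram F I₂) (op ⟨J.unop.1, h₂⟩) ≫ s.inr
  else
    have h₀ : I₀ ≤ J.unop.1 := ((sq.cover _ J.unop.2).resolve_left h₁).resolve_left h₂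
    F.map (homOfLE h₀).op ≫ colimit.ι (colimDiagram F I₁) (op ⟨I₀, sq.le₀₁⟩) ≫ s.inl

lemma gluedLeg_eq_left (hS : SupClosed' S) {J : (below S I)ᵒᵖ} {K : S} (f : op J.unop.1 ⟶ op K)
    (hK : K ≤ I₁) :
    gluedLeg sq s J = F.map f ≫ colimit.ι (colimDiagram F I₁) (op ⟨K, hK⟩) ≫ s.inl := by
  unfold gluedLeg
  split_ifs with h₁ h₂
  · rw [← Category.assoc, map_ι_colimDiagram]
  · have hK₂ : K ≤ I₂ := (leOfHom f.unop).trans h₂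
    rw [ι_inl_eq_ι_inr sq s hK hK₂, ← Category.assoc, map_ι_colimDiagram]
  · rw [← Category.assoc, ← Category.assoc, map_ι_eq_map_ι F hS f _ hK sq.le₀₁]

lemma gluedLeg_eq_right (hS : SupClosed' S) {J : (below S I)ᵒᵖ} {K : S} (f : op J.unop.1 ⟶ op K)
    (hK : K ≤ I₂) :
    gluedLeg sq s J = F.map f ≫ colimit.ι (colimDiagram F I₂) (op ⟨K, hK⟩) ≫ s.inr := by
  unfold gluedLeg
  split_ifs with h₁ h₂
  · have hK₁ : K ≤ I₁ := (leOfHom f.unop).trans h₁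
    rw [← ι_inl_eq_ι_inr sq s hK₁ hK, ← Category.assoc, map_ι_colimDiagram]
  · rw [← Category.assoc, map_ι_colimDiagram]
  · rw [ι_inl_eq_ι_inr sq s sq.le₀₁ sq.le₀₂, ← Category.assoc, ← Category.assoc,
      map_ι_eq_map_ι F hS _ f sq.le₀₂ hK]

lemma gluedLeg_naturality (hS : SupClosed' S) {J J' : (below S I)ᵒᵖ} (g : J ⟶ J') :
    F.map (homOfLE (leOfHom g.unop)).op ≫ gluedLeg sq s J' = gluedLeg sq s J := by
  let g' : op J.unop.1 ⟶ op J'.unop.1 := (homOfLE (leOfHom g.unop)).op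
  rcases sq.cover _ J'.unop.2 with h | h | h
  · rw [gluedLeg_eq_left sq s hS (𝟙 _) h, gluedLeg_eq_left sq s hS (g' ≫ 𝟙 _) h,
      F.map_comp_assoc]
  · rw [gluedLeg_eq_right sq s hS (𝟙 _) h, gluedLeg_eq_right sq s hS (g' ≫ 𝟙 _) h,
      F.map_comp_assoc]
  · rw [gluedLeg_eq_left sq s hS (homOfLE h).op sq.le₀₁,
      gluedLeg_eq_left sq s hS (g' ≫ (homOfLE h).op) sq.le₀₁, F.map_comp_assoc]

noncomputable abbrev gluedCocone (hS : SupClosed' S) : Cocone (colimDiagram F I) where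
  pt := s.pt
  ι :=
    { app := gluedLeg sq s
      naturality _ _ g := by simpa using gluedLeg_naturality sq s hS g }

variable (F) in
theorem isPushout_colimBelowMap (hS : SupClosed' S) :
    IsPushout (colimBelowMap F sq.le₀₁) (colimBelowMap F sq.le₀₂) (colimBelowMap F sq.le₁)
      (colimBelowMap F sq.le₂) := by
  have w : colimBelowMap F sq.le₀₁ ≫ colimBelowMap F sq.le₁ =
      colimBelowMap F sq.le₀₂ ≫ colimBelowMap F sq.le₂ := by
    ext; simp
  refine .of_isColimit' ⟨w⟩ (PushoutCocone.IsColimit.mk w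
    (fun s => colimit.desc _ (gluedCocone sq s hS)) (fun s => ?_) (fun s => ?_)
    (fun s m hl hr => ?_))
  · ext J
    simp [gluedLeg_eq_left sq s hS (J := op ⟨J.unop.1, J.unop.2.trans sq.le₁⟩) (𝟙 _) J.unop.2]
  · ext J
    simp [gluedLeg_eq_right sq s hS (J := op ⟨J.unop.1, J.unop.2.trans sq.le₂⟩) (𝟙 _) J.unop.2]
  · ext J
    rw [colimit.ι_desc]
    rcases sq.cover _ J.unop.2 with h | h | h
    · simp [gluedLeg_eq_left sq s hS (𝟙 _) h, ← hl]
    · simp [gluedLeg_eq_right sq s hS (𝟙 _) h, ← hr]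
    · simp only [gluedLeg_eq_left sq s hS (homOfLE h).op sq.le₀₁, ← hl, ι_colimBelowMap_assoc]
      rw [← Category.assoc, map_ι_colimDiagram]

end Gluing

lemma isCoveringSquare_mk {a p b : ℕ} (hap : a ≤ p) (hpb : p ≤ b)
    (hab : NatInt.mk a b (hap.trans hpb) ∈ S) (hl : NatInt.mk a p hap ∈ S)
    (hm : NatInt.mk p p le_rfl ∈ S) (hr : NatInt.mk p b hpb ∈ S) :
    IsCoveringSquare (S := S) ⟨_, hm⟩ ⟨_, hl⟩ ⟨_, hr⟩ ⟨_, hab⟩ where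
  le₀₁ := NatInt.mk_le_mk hap le_rfl
  le₀₂ := NatInt.mk_le_mk le_rfl hpb
  le₁ := NatInt.mk_le_mk le_rfl hpb
  le₂ := NatInt.mk_le_mk hap le_rfl
  cover _ hJ := NatInt.le_left_or_le_right_or_point_le hap hpb hJ
  meet _ h₁ h₂ := ⟨h₂.1, h₁.2⟩

theorem isCumulativeOn_colimBelow [HasColimitsOfSize.{0, 0} D] (hS : SupClosed' S)
    (F : Sᵒᵖ ⥤ D) : IsCumulativeOn S (colimBelow F) :=
  fun _ _ _ hap hpb hab hl hm hr =>
    isPushout_colimBelowMap F (isCoveringSquare_mk hap hpb hab hl hm hr) hS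

lemma IsCumulativeOn.leftOp {G : S ⥤ Dᵒᵖ} (h : IsCumulativeOn S G) :
    IsPersistentOn S G.leftOp :=
  fun a p b hap hpb hab hl hm hr => (h a p b hap hpb hab hl hm hr).unop.flip

lemma IsPersistentOn.of_iso {F F' : Sᵒᵖ ⥤ D} (e : F ≅ F') (h : IsPersistentOn S F) :
    IsPersistentOn S F' :=
  fun a p b hap hpb hab hl hm hr => (h a p b hap hpb hab hl hm hr).of_iso
    (e.app _) (e.app _) (e.app _) (e.app _)
    (e.hom.naturality _) (e.hom.naturality _) (e.hom.naturality _) (e.hom.naturality _)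

section Duality

variable [HasLimitsOfSize.{0, 0} D] (G : S ⥤ D)

noncomputable def unopColimitIsoLimit (I : S) :
    unop (colimit (colimDiagram G.op I)) ≅ limit (limDiagram G I) :=
  (limitUnopIsoUnopColimit (colimDiagram G.op I)).symm

@[simp]
lemma unopColimitIsoLimit_hom_π (I : S) (J : below S I) :
    (unopColimitIsoLimit G I).hom ≫ limit.π (limDiagram G I) J =
      (colimit.ι (colimDiagram G.op I) (op J)).unop :=
  limitUnopIsoUnopColimit_inv_comp_π _ _

noncomputable def leftOpColimBelowOpIso : (colimBelow G.op).leftOp ≅ limBelow G :=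
  NatIso.ofComponents (fun I => unopColimitIsoLimit G I.unop) fun f => by
    ext J
    simp [← unop_comp]

end Duality

theorem isPersistentOn_limBelow [HasLimitsOfSize.{0, 0} D] (hS : SupClosed' S) (G : S ⥤ D) :
    IsPersistentOn S (limBelow G) :=
  (isCumulativeOn_colimBelow hS G.op).leftOp.of_iso (leftOpColimBelowOpIso G)

section Narratives

noncomputable def peToCu [HasColimitsOfSize.{0, 0} D] (hS : SupClosed' S) : Pe S D ⥤ Cu S D :=
  ObjectProperty.lift _ (ObjectProperty.ι _ ⋙ colimBelowFunctor) fun F =>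
    isCumulativeOn_colimBelow hS F.obj

noncomputable def cuToPe [HasLimitsOfSize.{0, 0} D] (hS : SupClosed' S) : Cu S D ⥤ Pe S D :=
  ObjectProperty.lift _ (ObjectProperty.ι _ ⋙ limBelowFunctor) fun G =>
    isPersistentOn_limBelow hS G.obj

noncomputable def peToCuAdjunction [HasLimitsOfSize.{0, 0} D] [HasColimitsOfSize.{0, 0} D]
    (hS : SupClosed' S) : peToCu (D := D) hS ⊣ cuToPe hS :=
  colimBelowAdjunction.restrictFullyFaithful (ObjectProperty.fullyFaithfulι _)
    (ObjectProperty.fullyFaithfulι _) (Iso.refl _) (Iso.refl _)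

end Narratives

theorem persistent_cumulative_adjunction_general
    {D : Type*} [Category D]
    [HasLimitsOfSize.{0, 0} D] [HasColimitsOfSize.{0, 0} D]
    (S : Set NatInt) (hS : SupClosed' S) :
    ∃ (K : Pe S D ⥤ Cu S D) (P : Cu S D ⥤ Pe S D),
      (∀ (F : Pe S D) (I : ↥S),
        Nonempty ((K.obj F).obj.obj I ≅ colimit ((belowIncl S I).op ⋙ F.obj))) ∧
      (∀ (G : Cu S D) (I : ↥S),
        Nonempty ((P.obj G).obj.obj (Opposite.op I) ≅ limit (belowIncl S I ⋙ G.obj))) ∧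
      Nonempty (K ⊣ P) :=
  ⟨peToCu hS, cuToPe hS, fun _ _ => ⟨Iso.refl _⟩, fun _ _ => ⟨Iso.refl _⟩,
    ⟨peToCuAdjunction hS⟩⟩

/-- Adjunction between the persistent and cumulative perspectives: for a
finite time category `S` and a category `D` with limits and colimits, the
functor `K : Pe(S,D) ⥤ Cu(S,D)` (colimit over subintervals) is left adjoint
to the functor `P : Cu(S,D) ⥤ Pe(S,D)` (limit over subintervals). -/
theorem persistent_cumulative_adjunction
    {D : Type*} [Category D]
    [HasLimitsOfSize.{0, 0} D] [HasColimitsOfSize.{0, 0} D]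
    (S : Set NatInt) (hfin : S.Finite) (hS : SupClosed' S) :
    ∃ (K : Pe S D ⥤ Cu S D) (P : Cu S D ⥤ Pe S D),
      (∀ (F : Pe S D) (I : ↥S),
        Nonempty ((K.obj F).obj.obj I ≅ colimit ((belowIncl S I).op ⋙ F.obj))) ∧
      (∀ (G : Cu S D) (I : ↥S),
        Nonempty ((P.obj G).obj.obj (Opposite.op I) ≅ limit (belowIncl S I ⋙ G.obj))) ∧
      Nonempty (K ⊣ P) :=
  persistent_cumulative_adjunction_general S hS
end

section
/- Let G be a temporal graph in the sense of Kempe–Kleinberg–Kumar, i.e., a fixed vertex set V with a sequence of edge sets (E_i)_{i ∈ ℕ}, each E_i a set of unordered pairs of V. Then G determines a unique (up to isomorphism) cumulative graph narrative Ĝ on the poset of closed intervals of ℕ, defined on instantaneous intervals by Ĝ([t,t]) := (V, E_t) and on longer intervals by iterated pushouts over the inclusions of the maximal common subgraph; in particular Ĝ([a,b]) has vertex set V and edge set (a disjoint-union-based accumulation of) ⋃_{t ∈ [a,b]} E_t. -/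
/-!
Every interval `[a,b+1]` is the pushout of `[a,b]` and `[b,b+1]` over `[b,b]`, so by induction on
the length, a morphism out of the value of a cumulative narrative on `[a,b]` is determined by its
restrictions to the subintervals of length at most one, and a transformation given on those short
intervals glues along the pushouts to a transformation on all intervals. Hence restriction to short
intervals is fully faithful on cumulative narratives: two of them agreeing on short intervals are
isomorphic. The accumulated graph is a cumulative narrative because, on edges, `[a,p]` and `[p,b]`
cover `[a,b]` and meet in `[p,p]`, and a union square of sets is a pushout; on vertices it is
constant.
-/

open CategoryTheory CategoryTheory.Limits

variable {D : Type*} [Category D]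

universe u

/-- The accumulation over the interval `[a,b]` of a Kempe–Kleinberg–Kumar
temporal graph `(V, (E_i))`: vertex set `V`, and as edges the disjoint-union
accumulation of the (unordered) edges active at the times `t ∈ [a,b]`
(each realized by its ordered representatives). -/
def accumGraph (V : Type) (Es : ℕ → Set (Sym2 V)) (a b : ℕ) : Gr.{0} :=
  parallelPair
    (TypeCat.ofHom (fun e : {x : (V × V) × ℕ // x.2 ∈ Set.Icc a b ∧ Sym2.mk x.1.1 x.1.2 ∈ Es x.2} =>
      e.1.1.1))
    (TypeCat.ofHom (fun e : {x : (V × V) × ℕ // x.2 ∈ Set.Icc a b ∧ Sym2.mk x.1.1 x.1.2 ∈ Es x.2} => e.1.1.2))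

namespace NatInt

def IsShort : ObjectProperty NatInt := fun I => I.1.2 ≤ I.1.1 + 1

lemma isShort_mk_self (t : ℕ) : IsShort (mk t t le_rfl) := Nat.le_succ t

lemma isShort_mk_succ (t : ℕ) : IsShort (mk t (t + 1) (Nat.le_succ t)) := le_rfl

lemma IsShort.le_or_le {K : NatInt} (hK : IsShort K) {a p b : ℕ} (hap : a ≤ p) (hpb : p ≤ b)
    (h : K ≤ mk a b (hap.trans hpb)) : K ≤ mk a p hap ∨ K ≤ mk p b hpb := by
  change K.1.2 ≤ K.1.1 + 1 at hK
  change a ≤ K.1.1 ∧ K.1.2 ≤ b at h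
  by_cases hp : K.1.2 ≤ p
  · exact Or.inl ⟨h.1, hp⟩
  · exact Or.inr ⟨show p ≤ K.1.1 by omega, h.2⟩

lemma exists_eq_mk (I : NatInt) : ∃ a b, ∃ hab : a ≤ b, I = mk a b hab := ⟨_, _, I.2, rfl⟩

@[elab_as_elim]
theorem induction_right {P : NatInt → Prop} (base : ∀ t, P (mk t t le_rfl))
    (succ : ∀ a b (hab : a ≤ b), P (mk a b hab) →
      P (mk a (b + 1) (hab.trans (Nat.le_succ b))))
    (I : NatInt) : P I := by
  obtain ⟨⟨a, b⟩, hab⟩ := I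
  induction b, hab using Nat.le_induction with
  | base => exact base a
  | succ n han ih => exact succ a n han ih

end NatInt

open NatInt

section Restriction

variable {F G : NatInt ⥤ D}

def IsExtensionAt (φ : IsShort.ι ⋙ F ⟶ IsShort.ι ⋙ G) (I : NatInt)
    (e : F.obj I ⟶ G.obj I) : Prop :=
  ∀ (K : IsShort.FullSubcategory) (h : K.obj ≤ I),
    F.map (homOfLE h) ≫ e = φ.app K ≫ G.map (homOfLE h)

lemma isExtensionAt_app (φ : IsShort.ι ⋙ F ⟶ IsShort.ι ⋙ G) (I : IsShort.FullSubcategory) :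
    IsExtensionAt φ I.obj (φ.app I) :=
  fun _ h => φ.naturality (ObjectProperty.homMk (homOfLE h))

namespace IsCumulativeNarr

variable (hF : IsCumulativeNarr F)
include hF

theorem hom_ext {I : NatInt} {X : D} {f g : F.obj I ⟶ X}
    (h : ∀ (K : IsShort.FullSubcategory) (hK : K.obj ≤ I),
      F.map (homOfLE hK) ≫ f = F.map (homOfLE hK) ≫ g) : f = g := by
  induction I using NatInt.induction_right with
  | base t => simpa [homOfLE_refl] using h ⟨_, isShort_mk_self t⟩ le_rfl
  | succ a b hab ih =>
    apply (hF a b (b + 1) hab (Nat.le_succ b)).hom_ext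
    · refine ih fun K hK => ?_
      rw [← F.map_comp_assoc, homOfLE_comp, ← F.map_comp_assoc, homOfLE_comp]
      exact h K _
    · exact h ⟨_, isShort_mk_succ b⟩ _

theorem natTrans_ext {α β : F ⟶ G}
    (h : Functor.whiskerLeft IsShort.ι α = Functor.whiskerLeft IsShort.ι β) : α = β := by
  ext I
  refine hF.hom_ext fun K hK => ?_
  rw [α.naturality, β.naturality]
  exact congrArg (· ≫ G.map (homOfLE hK)) (NatTrans.congr_app h K)

variable (φ : IsShort.ι ⋙ F ⟶ IsShort.ι ⋙ G)

theorem exists_isExtensionAt_of_pushout {a p b : ℕ} (hap : a ≤ p) (hpb : p ≤ b) {e₁ e₂}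
    (h₁ : IsExtensionAt φ (mk a p hap) e₁) (h₂ : IsExtensionAt φ (mk p b hpb) e₂) :
    ∃ e, IsExtensionAt φ (mk a b (hap.trans hpb)) e := by
  have hp := isShort_mk_self p
  have hpush := hF a p b hap hpb
  refine ⟨hpush.desc (e₁ ≫ G.map (homOfLE (mk_le_mk le_rfl hpb)))
    (e₂ ≫ G.map (homOfLE (mk_le_mk hap le_rfl))) ?_, fun K hK => ?_⟩
  · rw [← Category.assoc, h₁ ⟨_, hp⟩, ← Category.assoc, h₂ ⟨_, hp⟩, Category.assoc,
      Category.assoc, ← G.map_comp, ← G.map_comp]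
    rfl
  · rcases K.property.le_or_le hap hpb hK with hK' | hK'
    · rw [← homOfLE_comp hK' (mk_le_mk le_rfl hpb), F.map_comp, Category.assoc, hpush.inl_desc,
        ← Category.assoc, h₁ K hK', Category.assoc, ← G.map_comp]
    · rw [← homOfLE_comp hK' (mk_le_mk hap le_rfl), F.map_comp, Category.assoc, hpush.inr_desc,
        ← Category.assoc, h₂ K hK', Category.assoc, ← G.map_comp]

theorem exists_isExtensionAt (I : NatInt) : ∃ e, IsExtensionAt φ I e := by
  induction I using NatInt.induction_right with
  | base t => exact ⟨_, isExtensionAt_app φ ⟨_, isShort_mk_self t⟩⟩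
  | succ a b hab ih =>
    obtain ⟨e, he⟩ := ih
    exact hF.exists_isExtensionAt_of_pushout φ hab (Nat.le_succ b) he
      (isExtensionAt_app φ ⟨_, isShort_mk_succ b⟩)

noncomputable def extend : F ⟶ G where
  app I := (hF.exists_isExtensionAt φ I).choose
  naturality I J f := hF.hom_ext fun K hK => by
    rw [← homOfLE_leOfHom f, ← Category.assoc, ← F.map_comp, homOfLE_comp,
      (hF.exists_isExtensionAt φ J).choose_spec, ← Category.assoc,
      (hF.exists_isExtensionAt φ I).choose_spec, Category.assoc, ← G.map_comp]
    rfl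

theorem isExtensionAt_extend_app (I : NatInt) : IsExtensionAt φ I ((hF.extend φ).app I) :=
  (hF.exists_isExtensionAt φ I).choose_spec

@[simp]
theorem whiskerLeft_extend : Functor.whiskerLeft IsShort.ι (hF.extend φ) = φ := by
  ext K
  simpa [homOfLE_refl] using hF.isExtensionAt_extend_app φ K.obj K le_rfl

end IsCumulativeNarr

noncomputable def IsCumulativeNarr.isoOfRestrictionIso (hF : IsCumulativeNarr F)
    (hG : IsCumulativeNarr G) (φ : IsShort.ι ⋙ F ≅ IsShort.ι ⋙ G) : F ≅ G where
  hom := hF.extend φ.hom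
  inv := hG.extend φ.inv
  hom_inv_id := hF.natTrans_ext (by simp [Functor.whiskerLeft_comp])
  inv_hom_id := hG.natTrans_ext (by simp [Functor.whiskerLeft_comp])

end Restriction

section GeneratingInclusions

variable {F G : NatInt ⥤ D}
  (hobj0 : ∀ t : ℕ, F.obj (mk t t le_rfl) = G.obj (mk t t le_rfl))
  (hobj1 : ∀ t : ℕ, F.obj (mk t (t + 1) (Nat.le_succ t)) = G.obj (mk t (t + 1) (Nat.le_succ t)))

include hobj0 hobj1 in
lemma obj_eq_of_isShort (K : IsShort.FullSubcategory) : F.obj K.obj = G.obj K.obj := by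
  obtain ⟨K, hK⟩ := K
  obtain ⟨a, b, hab, rfl⟩ := K.exists_eq_mk
  obtain rfl | rfl : b = a ∨ b = a + 1 := by change b ≤ a + 1 at hK; omega
  exacts [hobj0 b, hobj1 a]

def restrictionIsoOfEq
    (hmap0 : ∀ t : ℕ, F.map (homOfLE (mk_le_mk (h := le_rfl) (h' := Nat.le_succ t) le_rfl
      (Nat.le_succ t))) ≫ eqToHom (hobj1 t) =
      eqToHom (hobj0 t) ≫ G.map (homOfLE (mk_le_mk (h := le_rfl) (h' := Nat.le_succ t) le_rfl
        (Nat.le_succ t))))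
    (hmap1 : ∀ t : ℕ, F.map (homOfLE (mk_le_mk (h := le_rfl) (h' := Nat.le_succ t)
      (Nat.le_succ t) le_rfl)) ≫ eqToHom (hobj1 t) =
      eqToHom (hobj0 (t + 1)) ≫ G.map (homOfLE (mk_le_mk (h := le_rfl) (h' := Nat.le_succ t)
        (Nat.le_succ t) le_rfl))) :
    IsShort.ι ⋙ F ≅ IsShort.ι ⋙ G :=
  NatIso.ofComponents (fun K => eqToIso (obj_eq_of_isShort hobj0 hobj1 K)) fun {K K'} f => by
    obtain ⟨K, hK⟩ := K
    obtain ⟨K', hK'⟩ := K'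
    obtain ⟨a, b, hab, rfl⟩ := K.exists_eq_mk
    obtain ⟨c, d, hcd, rfl⟩ := K'.exists_eq_mk
    obtain ⟨hca, hbd⟩ := leOfHom f.hom
    have hba : b ≤ a + 1 := hK
    have hdc : d ≤ c + 1 := hK'
    change c ≤ a at hca
    change b ≤ d at hbd
    simp only [Functor.comp_map, ObjectProperty.ι_map, eqToIso.hom]
    -- an identity, or one of the inclusions `[a,a] ⊆ [a,a+1]` and `[c+1,c+1] ⊆ [c,c+1]`
    obtain ⟨rfl, rfl⟩ | ⟨rfl, rfl, rfl⟩ | ⟨rfl, rfl, rfl⟩ :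
        (c = a ∧ d = b) ∨ (b = a ∧ c = a ∧ d = a + 1) ∨
          (b = a ∧ a = c + 1 ∧ d = c + 1) := by
      omega
    · rw [Subsingleton.elim f.hom (𝟙 (mk c d hab))]
      simp
    · rw [Subsingleton.elim f.hom (homOfLE _)]
      exact hmap0 c
    · rw [Subsingleton.elim f.hom (homOfLE _)]
      exact hmap1 c

end GeneratingInclusions

section Accumulation

variable (V : Type) (Es : ℕ → Set (Sym2 V))

-- Up to unfolding, the edge type of `accumGraph V Es a b` is this set for `I = [a,b]`.
def accumEdges (I : NatInt) : Set ((V × V) × ℕ) :=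
  {x | x.2 ∈ Set.Icc I.1.1 I.1.2 ∧ s(x.1.1, x.1.2) ∈ Es x.2}

lemma accumEdges_mono : Monotone (accumEdges V Es) :=
  fun _ _ h _ hx => ⟨⟨h.1.trans hx.1.1, hx.1.2.trans h.2⟩, hx.2⟩

lemma bicartSq_accumEdges {a p b : ℕ} (hap : a ≤ p) (hpb : p ≤ b) :
    Lattice.BicartSq (accumEdges V Es (mk p p le_rfl)) (accumEdges V Es (mk a p hap))
      (accumEdges V Es (mk p b hpb)) (accumEdges V Es (mk a b (hap.trans hpb))) := by
  constructor <;> ext ⟨e, t⟩ <;> by_cases he : s(e.1, e.2) ∈ Es t <;>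
    simp [accumEdges, mk, he] <;> omega

def accumNarrative : NatInt ⥤ Gr.{0} where
  obj I := accumGraph V Es I.1.1 I.1.2
  map f := parallelPairHom _ _ _ _
    (Set.functorToTypes.map (homOfLE (accumEdges_mono V Es (leOfHom f)))) (𝟙 V) rfl rfl
  map_id _ := by ext (_ | _) <;> rfl
  map_comp _ _ := by ext (_ | _) <;> rfl

theorem isCumulativeNarr_accumNarrative : IsCumulativeNarr (accumNarrative V Es) := by
  intro a p b hap hpb
  refine IsPushout.of_forall_isPushout_app fun j => ?_
  cases j
  · exact Types.isPushout_of_bicartSq (bicartSq_accumEdges V Es hap hpb)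
  · exact IsPushout.id_vert (𝟙 V)

end Accumulation

/-- A Kempe–Kleinberg–Kumar temporal graph `(V, (E_i)_{i ∈ ℕ})` determines a
unique-up-to-isomorphism cumulative graph narrative on the poset of closed
intervals of ℕ, whose value on `[a,b]` is the accumulated graph with vertex
set `V` and edge set the disjoint-union accumulation of `⋃_{t ∈ [a,b]} E_t`. -/
theorem kkk_determines_cumulative_narrative
    (V : Type) (Es : ℕ → Set (Sym2 V)) :
    ∃ Ghat : NatInt ⥤ Gr.{0}, IsCumulativeNarr Ghat ∧
      (∀ (a b : ℕ) (h : a ≤ b),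
        Nonempty (Ghat.obj (NatInt.mk a b h) ≅ accumGraph V Es a b)) ∧
      (∀ Ghat' : NatInt ⥤ Gr.{0}, IsCumulativeNarr Ghat' →
        ∀ (hobj0 : ∀ t : ℕ, Ghat'.obj (NatInt.mk t t le_rfl) =
            Ghat.obj (NatInt.mk t t le_rfl))
          (hobj1 : ∀ t : ℕ, Ghat'.obj (NatInt.mk t (t+1) (Nat.le_succ t)) =
            Ghat.obj (NatInt.mk t (t+1) (Nat.le_succ t))),
          (∀ t : ℕ,
            Ghat'.map (homOfLE (NatInt.mk_le_mk (h := le_rfl)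
              (h' := Nat.le_succ t) le_rfl (Nat.le_succ t))) ≫
                eqToHom (hobj1 t) =
            eqToHom (hobj0 t) ≫
              Ghat.map (homOfLE (NatInt.mk_le_mk (h := le_rfl)
                (h' := Nat.le_succ t) le_rfl (Nat.le_succ t)))) →
          (∀ t : ℕ,
            Ghat'.map (homOfLE (NatInt.mk_le_mk (h := le_rfl)
              (h' := Nat.le_succ t) (Nat.le_succ t) le_rfl)) ≫
                eqToHom (hobj1 t) =
            eqToHom (hobj0 (t+1)) ≫
              Ghat.map (homOfLE (NatInt.mk_le_mk (h := le_rfl)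
                (h' := Nat.le_succ t) (Nat.le_succ t) le_rfl))) →
          Nonempty (Ghat' ≅ Ghat)) := by
  refine ⟨accumNarrative V Es, isCumulativeNarr_accumNarrative V Es,
    fun a b h => ⟨Iso.refl _⟩, ?_⟩
  intro Ghat' hGhat' hobj0 hobj1 hmap0 hmap1
  exact ⟨hGhat'.isoOfRestrictionIso (isCumulativeNarr_accumNarrative V Es)
    (restrictionIsoOfEq hobj0 hobj1 hmap0 hmap1)⟩
end

section
/- Let K̂ be a cumulative graph narrative on closed intervals of ℕ whose value on every interval of length at least n is a complete graph on at least k vertices, and whose corestriction maps are all monomorphisms. Then for every time t ≥ n, the instantaneous graph K̂([t,t]) has at least k vertices. -/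
open CategoryTheory CategoryTheory.Limits

variable {D : Type*} [Category D]

universe u

/-- A multigraph has at least `k` vertices. -/
def Gr.AtLeastVerts (k : ℕ) (G : Gr.{u}) : Prop :=
  ∃ f : Fin k → G.Verts, Function.Injective f

/-! A complete pushout `X ⊔_W Y` of graphs along a vertex-injective leg `W → X` forces one of
`W → X`, `W → Y` to be vertex-surjective: if some vertex `x` of `X` is missed, then `x` is
joined to every vertex `y` of `Y` in the pushout, and such an edge must come from `X`, so `y`
was already glued to a vertex of `X`, i.e. lies in the image of `W`. Applied to the cover
`[t-n+1, t] ∪ [t, t+n-1]`, this makes `K̂([t,t])` as large as one of the two halves. -/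

namespace Gr

variable {A B : Gr.{u}}

lemma src_app (η : A ⟶ B) (e : A.Edges) :
    B.src (η.app WalkingParallelPair.zero e) = η.app WalkingParallelPair.one (A.src e) :=
  (types_congr_hom (η.naturality WalkingParallelPairHom.left) e).symm

lemma tgt_app (η : A ⟶ B) (e : A.Edges) :
    B.tgt (η.app WalkingParallelPair.zero e) = η.app WalkingParallelPair.one (A.tgt e) :=
  (types_congr_hom (η.naturality WalkingParallelPairHom.right) e).symm

lemma injective_app_of_mono (η : A ⟶ B) [Mono η] (o : WalkingParallelPair) :
    Function.Injective (η.app o) :=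
  (mono_iff_injective _).1 ((NatTrans.mono_iff_mono_app η).1 inferInstance o)

lemma AtLeastVerts.of_surjective {k : ℕ} (η : A ⟶ B)
    (hη : Function.Surjective (η.app WalkingParallelPair.one)) (hB : B.AtLeastVerts k) :
    A.AtLeastVerts k :=
  let ⟨φ, hφ⟩ := hB
  ⟨Function.surjInv hη ∘ φ, (Function.injective_surjInv hη).comp hφ⟩

variable {W X Y Z : Gr.{u}} {f : W ⟶ X} {g : W ⟶ Y} {h : X ⟶ Z} {i : Y ⟶ Z}

lemma IsComplete.mem_range_of_isPushout (H : IsPushout f g h i) (hZ : Z.IsComplete)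
    {v w : Z.Verts} (hvw : v ≠ w) :
    (v ∈ Set.range (h.app .one) ∧ w ∈ Set.range (h.app .one)) ∨
      (v ∈ Set.range (i.app .one) ∧ w ∈ Set.range (i.app .one)) := by
  have He := H.map ((evaluation WalkingParallelPair (Type u)).obj .zero)
  obtain ⟨e, he⟩ := hZ v w hvw
  have hends : ∀ {ρ : Set Z.Verts}, Z.src e ∈ ρ → Z.tgt e ∈ ρ → v ∈ ρ ∧ w ∈ ρ := by
    rintro ρ hs ht
    rcases he with ⟨rfl, rfl⟩ | ⟨rfl, rfl⟩
    exacts [⟨hs, ht⟩, ⟨ht, hs⟩]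
  rcases Types.eq_or_eq_of_isPushout He e with ⟨e', rfl⟩ | ⟨e', rfl⟩
  · exact .inl (hends ⟨_, (src_app h e').symm⟩ ⟨_, (tgt_app h e').symm⟩)
  · exact .inr (hends ⟨_, (src_app i e').symm⟩ ⟨_, (tgt_app i e').symm⟩)

lemma IsComplete.surjective_or_surjective_of_isPushout (H : IsPushout f g h i)
    (hf : Function.Injective (f.app .one)) (hZ : Z.IsComplete) :
    Function.Surjective (f.app .one) ∨ Function.Surjective (g.app .one) := by
  have Hv := H.map ((evaluation WalkingParallelPair (Type u)).obj .one)
  have glued : ∀ x y, h.app .one x = i.app .one y → ∃ w, f.app .one w = x ∧ g.app .one w = y :=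
    (Types.pushoutCocone_inl_eq_inr_iff_of_isColimit Hv.isColimit hf · · |>.1)
  refine or_iff_not_imp_left.2 fun hfs y => ?_
  obtain ⟨x, hx⟩ := not_forall.1 hfs
  have hne : h.app .one x ≠ i.app .one y := fun hxy =>
    let ⟨w, hw, _⟩ := glued x y hxy
    hx ⟨w, hw⟩
  rcases hZ.mem_range_of_isPushout H hne with ⟨-, x', hx'⟩ | ⟨⟨y', hy'⟩, -⟩
  · obtain ⟨w, -, hw⟩ := glued x' y hx'
    exact ⟨w, hw⟩
  · obtain ⟨w, hw, -⟩ := glued x y' hy'.symm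
    exact absurd ⟨w, hw⟩ hx

end Gr

lemma IsCumulativeNarr.atLeastVerts_of_isComplete {G : NatInt ⥤ Gr.{u}} (hG : IsCumulativeNarr G)
    (hmono : ∀ (I J : NatInt) (h : I ≤ J), Mono (G.map (homOfLE h)))
    {a p b k : ℕ} (hap : a ≤ p) (hpb : p ≤ b)
    (hcomplete : (G.obj (NatInt.mk a b (hap.trans hpb))).IsComplete)
    (hleft : (G.obj (NatInt.mk a p hap)).AtLeastVerts k)
    (hright : (G.obj (NatInt.mk p b hpb)).AtLeastVerts k) :
    (G.obj (NatInt.mk p p le_rfl)).AtLeastVerts k := by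
  have hinj := Gr.injective_app_of_mono
    (G.map (homOfLE (NatInt.mk_le_mk (h := le_rfl) (h' := hap) hap le_rfl))) .one
  rcases hcomplete.surjective_or_surjective_of_isPushout (hG a p b hap hpb) hinj with hs | hs
  exacts [hleft.of_surjective _ hs, hright.of_surjective _ hs]

/-- If a cumulative graph narrative with monic corestriction maps is a
complete graph on at least `k` vertices on every interval of length at least
`n`, then for every time `t ≥ n` the instantaneous snapshot `K̂([t,t])` has
at least `k` vertices. -/
theorem clique_narrative_instantaneous_vertices
    (n k : ℕ) (Khat : NatInt ⥤ Gr.{0})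
    (hcu : IsCumulativeNarr Khat)
    (hmono : ∀ (I J : NatInt) (h : I ≤ J), Mono (Khat.map (homOfLE h)))
    (hcomplete : ∀ (a b : ℕ) (h : a ≤ b), a + n ≤ b + 1 →
      (Khat.obj (NatInt.mk a b h)).IsComplete ∧
      Gr.AtLeastVerts k (Khat.obj (NatInt.mk a b h)))
    (t : ℕ) (ht : n ≤ t) :
    Gr.AtLeastVerts k (Khat.obj (NatInt.mk t t le_rfl)) := by
  by_cases hn : n ≤ 1
  · exact (hcomplete t t le_rfl (by omega)).2
  have hat : t + 1 - n ≤ t := by omega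
  have htb : t ≤ t + n - 1 := by omega
  exact hcu.atLeastVerts_of_isComplete hmono hat htb
    (hcomplete _ _ (hat.trans htb) (by omega)).1
    (hcomplete _ _ hat (by omega)).2 (hcomplete _ _ htb (by omega)).2
end
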